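/- Let N = 3 and define the nine 9×9 matrices P_{22} = (22)⊗(22), 2P_{21(ε)} = (22)⊗((11)+(33)+ε((13)+(31))), 2P_{12(ε)} = ((11)+(33)+ε((13)+(31)))⊗(22), 2P_{11(ε)} = (11)⊗(11)+(33)⊗(33)+ε((13)⊗(13)+(31)⊗(31)), 2P_{1\bar{1}(ε)} = (11)⊗(33)+(33)⊗(11)+ε((13)⊗(31)+(31)⊗(13)) for ε = ±1, where (ab) denotes the 3×3 matrix with a single 1 in row a, column b. Then these nine matrices are mutually orthogonal idempotents whose sum is the 9×9 identity matrix. -/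
import Mathlib


open Matrix Kronecker

/-- `(a b)`: the 3×3 elementary matrix with a single 1 in row `a`, column `b`
(1-based indices, as in the paper). -/
def elem3 (a b : ℕ) : Matrix (Fin 3) (Fin 3) ℝ :=
  fun c d => if (c : ℕ) + 1 = a ∧ (d : ℕ) + 1 = b then 1 else 0


lemma elem3_mul_same (a b d : ℕ) (h1 : 1 ≤ b) (h3 : b ≤ 3) :
    elem3 a b * elem3 b d = elem3 a d := by
  ext i j
  simp only [Matrix.mul_apply, elem3, Fin.sum_univ_three]
  interval_cases b <;> norm_num <;> split_ifs <;> simp_all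

lemma elem3_mul_ne (a b c d : ℕ) (h : b ≠ c) :
    elem3 a b * elem3 c d = 0 := by
  ext i j
  simp only [Matrix.mul_apply, elem3, Fin.sum_univ_three, Matrix.zero_apply]
  split_ifs <;> norm_num <;> omega

lemma sub_kron (A B : Matrix (Fin 3) (Fin 3) ℝ) (C : Matrix (Fin 3) (Fin 3) ℝ) :
    (A - B) ⊗ₖ C = A ⊗ₖ C - B ⊗ₖ C := by
  ext ⟨i,j⟩ ⟨k,l⟩; simp [Matrix.kroneckerMap_apply, sub_mul]

lemma kron_sub (A : Matrix (Fin 3) (Fin 3) ℝ) (B C : Matrix (Fin 3) (Fin 3) ℝ) :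
    A ⊗ₖ (B - C) = A ⊗ₖ B - A ⊗ₖ C := by
  ext ⟨i,j⟩ ⟨k,l⟩; simp [Matrix.kroneckerMap_apply, mul_sub]

/-- The nine 9×9 projectors of the `N = 3` nested basis:
`P₂₂`, `P_{21(ε)}`, `P_{12(ε)}`, `P_{11(ε)}`, `P_{1 1̄(ε)}` for `ε = ±1`. -/
noncomputable def P3 : Fin 9 → Matrix (Fin 3 × Fin 3) (Fin 3 × Fin 3) ℝ
  | 0 => elem3 2 2 ⊗ₖ elem3 2 2
  | 1 => (1/2 : ℝ) • (elem3 2 2 ⊗ₖ (elem3 1 1 + elem3 3 3 + (elem3 1 3 + elem3 3 1)))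
  | 2 => (1/2 : ℝ) • (elem3 2 2 ⊗ₖ (elem3 1 1 + elem3 3 3 - (elem3 1 3 + elem3 3 1)))
  | 3 => (1/2 : ℝ) • ((elem3 1 1 + elem3 3 3 + (elem3 1 3 + elem3 3 1)) ⊗ₖ elem3 2 2)
  | 4 => (1/2 : ℝ) • ((elem3 1 1 + elem3 3 3 - (elem3 1 3 + elem3 3 1)) ⊗ₖ elem3 2 2)
  | 5 => (1/2 : ℝ) • (elem3 1 1 ⊗ₖ elem3 1 1 + elem3 3 3 ⊗ₖ elem3 3 3
          + (elem3 1 3 ⊗ₖ elem3 1 3 + elem3 3 1 ⊗ₖ elem3 3 1))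
  | 6 => (1/2 : ℝ) • (elem3 1 1 ⊗ₖ elem3 1 1 + elem3 3 3 ⊗ₖ elem3 3 3
          - (elem3 1 3 ⊗ₖ elem3 1 3 + elem3 3 1 ⊗ₖ elem3 3 1))
  | 7 => (1/2 : ℝ) • (elem3 1 1 ⊗ₖ elem3 3 3 + elem3 3 3 ⊗ₖ elem3 1 1
          + (elem3 1 3 ⊗ₖ elem3 3 1 + elem3 3 1 ⊗ₖ elem3 1 3))
  | 8 => (1/2 : ℝ) • (elem3 1 1 ⊗ₖ elem3 3 3 + elem3 3 3 ⊗ₖ elem3 1 1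
          - (elem3 1 3 ⊗ₖ elem3 3 1 + elem3 3 1 ⊗ₖ elem3 1 3))

set_option maxHeartbeats 4000000 in
/-- The nine projectors are mutually orthogonal idempotents summing to the identity. -/
theorem P3_orthogonal_idempotent_complete :
    (∀ α β : Fin 9, P3 α * P3 β = if α = β then P3 α else 0) ∧
    (∑ α : Fin 9, P3 α) = (1 : Matrix (Fin 3 × Fin 3) (Fin 3 × Fin 3) ℝ) := by
  constructor
  · intro α β
    fin_cases α <;> fin_cases β <;>
      · simp only [P3, Fin.isValue, Fin.mk.injEq, if_true, if_false, reduceIte,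
          smul_mul_assoc, mul_smul_comm, add_mul, mul_add, sub_mul, mul_sub,
          ← Matrix.mul_kronecker_mul]
        norm_num [elem3_mul_same, elem3_mul_ne, Matrix.add_kronecker,
          Matrix.kronecker_add, sub_kron, kron_sub]
        all_goals module
  · have hsum : (∑ α : Fin 9, P3 α)
        = P3 0 + P3 1 + P3 2 + P3 3 + P3 4 + P3 5 + P3 6 + P3 7 + P3 8 := by
      rw [Fin.sum_univ_succ, Fin.sum_univ_succ, Fin.sum_univ_succ, Fin.sum_univ_succ,
        Fin.sum_univ_succ, Fin.sum_univ_succ, Fin.sum_univ_succ, Fin.sum_univ_succ,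
        Fin.sum_univ_one]
      norm_num [show (Fin.succ 0 : Fin 9) = 1 from rfl,
        show ((Fin.succ 0).succ : Fin 9) = 2 from rfl,
        show ((Fin.succ 0).succ.succ : Fin 9) = 3 from rfl,
        show ((Fin.succ 0).succ.succ.succ : Fin 9) = 4 from rfl,
        show ((Fin.succ 0).succ.succ.succ.succ : Fin 9) = 5 from rfl,
        show ((Fin.succ 0).succ.succ.succ.succ.succ : Fin 9) = 6 from rfl,
        show ((Fin.succ 0).succ.succ.succ.succ.succ.succ : Fin 9) = 7 from rfl,
        show ((Fin.succ 0).succ.succ.succ.succ.succ.succ.succ : Fin 9) = 8 from rfl]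
      abel
    have hone : elem3 1 1 + elem3 2 2 + elem3 3 3 = (1 : Matrix (Fin 3) (Fin 3) ℝ) := by
      ext i j
      fin_cases i <;> fin_cases j <;> simp [elem3, Matrix.one_apply]
    have hkron : (1 : Matrix (Fin 3 × Fin 3) (Fin 3 × Fin 3) ℝ)
        = (elem3 1 1 + elem3 2 2 + elem3 3 3) ⊗ₖ (elem3 1 1 + elem3 2 2 + elem3 3 3) := by
      rw [hone, Matrix.one_kronecker_one]
    rw [hsum, hkron]
    simp only [P3, Matrix.add_kronecker, Matrix.kronecker_add, sub_kron, kron_sub]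
    module
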